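/- arXiv:math/0412011 — 3 statements merged into one kernel-verified Lean document; each statement's English description precedes it below -/
import Mathlib

section
/- Let L be a lattice (discrete subgroup isomorphic to Z^2 of full rank) in the Euclidean plane C = R^2. Then λ₁(L)² ≤ (2/√3) · area(C/L), where λ₁(L) is the least norm of a nonzero vector of L and area(C/L) is the covolume of L. -/
/-!
Write `x ⬝ y = (conj x * y).re` and `x × y = (conj x * y).im`, so that
`‖x‖²‖y‖² = (x ⬝ y)² + (x × y)²`. The lattice has a shortest nonzero vector `x`; it is primitive,
so it extends to a basis `(x, y)` of the lattice with `x × y = v × w`, and replacing `y` by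
`y + k x` for a suitable integer `k` gives `|x ⬝ y| ≤ ‖x‖² / 2` while `‖x‖ ≤ ‖y‖` by minimality.
Then `‖x‖⁴ ≤ ‖x‖²‖y‖² ≤ ‖x‖⁴ / 4 + (v × w)²`, i.e. `‖x‖² ≤ (2 / √3) |v × w|`.
-/

open Complex ComplexConjugate

theorem Complex.sq_norm_mul_sq_norm (z u : ℂ) :
    ‖z‖ ^ 2 * ‖u‖ ^ 2 = (conj z * u).re ^ 2 + (conj z * u).im ^ 2 := by
  rw [← mul_pow, ← norm_conj z, ← norm_mul, Complex.sq_norm, normSq_apply]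
  ring

theorem Complex.exists_abs_re_conj_mul_add_intCast_mul_le {x : ℂ} (hx : x ≠ 0) (y : ℂ) :
    ∃ k : ℤ, |(conj x * (y + k * x)).re| ≤ ‖x‖ ^ 2 / 2 := by
  have hx2 : 0 < ‖x‖ ^ 2 := by positivity
  set t := -(conj x * y).re / ‖x‖ ^ 2
  refine ⟨round t, ?_⟩
  have hre : (conj x * (y + round t * x)).re = -(‖x‖ ^ 2 * (t - round t)) := by
    rw [mul_add, mul_left_comm, conj_mul', add_re]
    simp only [t]
    norm_cast
    field_simp
    ring
  rw [hre, abs_neg, abs_mul, abs_of_pos hx2]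
  calc ‖x‖ ^ 2 * |t - round t| ≤ ‖x‖ ^ 2 * (1 / 2) := by gcongr; exact abs_sub_round t
    _ = ‖x‖ ^ 2 / 2 := by ring

theorem Complex.sq_norm_le_of_abs_re_conj_mul_le {x y : ℂ} (hxy : ‖x‖ ≤ ‖y‖)
    (hre : |(conj x * y).re| ≤ ‖x‖ ^ 2 / 2) :
    ‖x‖ ^ 2 ≤ 2 / √3 * |(conj x * y).im| := by
  have key : 3 * (‖x‖ ^ 2) ^ 2 ≤ (2 * |(conj x * y).im|) ^ 2 := by
    have hnorm : ‖x‖ ^ 2 * ‖x‖ ^ 2 ≤ ‖x‖ ^ 2 * ‖y‖ ^ 2 := by gcongr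
    have hre_sq : (conj x * y).re ^ 2 ≤ (‖x‖ ^ 2 / 2) ^ 2 := by
      rw [← sq_abs]
      gcongr
    nlinarith [sq_norm_mul_sq_norm x y, sq_abs (conj x * y).im]
  have hs : √3 ^ 2 = 3 := Real.sq_sqrt (by norm_num)
  rw [div_mul_eq_mul_div, le_div_iff₀ (by positivity),
    ← pow_le_pow_iff_left₀ (by positivity) (by positivity) two_ne_zero, mul_pow, hs]
  linarith

theorem LinearIndependent.im_conj_mul_ne_zero {v w : ℂ} (h : LinearIndependent ℝ ![v, w]) :
    (conj v * w).im ≠ 0 := by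
  have hbasis := Complex.basisOneI.is_basis_iff_det.mp
    ⟨h, h.span_eq_top_of_card_eq_finrank (by simp)⟩
  convert hbasis.ne_zero using 1
  simp [Module.Basis.det_apply, Matrix.det_fin_two, Module.Basis.toMatrix_apply]
  ring

theorem im_conj_lattice_mul_lattice (v w : ℂ) (m n p q : ℤ) :
    (conj ((m : ℂ) * v + n * w) * (p * v + q * w)).im = (m * q - n * p) * (conj v * w).im := by
  simp only [map_add, map_mul, map_intCast, mul_im, add_im, add_re, mul_re, conj_re, conj_im,
    intCast_re, intCast_im]
  ring

theorem abs_det_mul_abs_im_conj_le (v w : ℂ) (m n p q : ℤ) :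
    |(m * q - n * p : ℝ)| * |(conj v * w).im| ≤
      ‖(m : ℂ) * v + n * w‖ * ‖(p : ℂ) * v + q * w‖ := by
  rw [← abs_mul, ← im_conj_lattice_mul_lattice, ← norm_conj ((m : ℂ) * v + n * w), ← norm_mul]
  exact abs_im_le_norm _

def IsShortestLatticeVec (v w : ℂ) (m n : ℤ) : Prop :=
  (m : ℂ) * v + n * w ≠ 0 ∧
    ∀ p q : ℤ, (p : ℂ) * v + q * w ≠ 0 → ‖(m : ℂ) * v + n * w‖ ≤ ‖(p : ℂ) * v + q * w‖

section Lattice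

variable {v w : ℂ}

theorem finite_setOf_norm_lattice_le (hD : (conj v * w).im ≠ 0) (R : ℝ) :
    {p : ℤ × ℤ | ‖(p.1 : ℂ) * v + p.2 * w‖ ≤ R}.Finite := by
  refine (isCompact_closedBall (0 : ℤ × ℤ)
    (R * max ‖v‖ ‖w‖ / |(conj v * w).im|)).finite_of_discrete.subset ?_
  rintro ⟨m, n⟩ (hmn : ‖(m : ℂ) * v + n * w‖ ≤ R)
  have hR : 0 ≤ R := (norm_nonneg _).trans hmn
  have hm := abs_det_mul_abs_im_conj_le v w m n 0 1
  have hn := abs_det_mul_abs_im_conj_le v w 1 0 m n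
  simp only [Int.cast_zero, Int.cast_one, zero_mul, zero_add, one_mul, mul_one, mul_zero,
    sub_zero, add_zero] at hm hn
  rw [mem_closedBall_zero_iff, Prod.norm_def, max_le_iff, le_div_iff₀ (abs_pos.mpr hD),
    le_div_iff₀ (abs_pos.mpr hD), Int.norm_eq_abs, Int.norm_eq_abs]
  exact ⟨hm.trans (mul_le_mul hmn (le_max_right _ _) (norm_nonneg _) hR),
    hn.trans (by rw [mul_comm]; exact mul_le_mul hmn (le_max_left _ _) (norm_nonneg _) hR)⟩

theorem exists_isShortestLatticeVec (hD : (conj v * w).im ≠ 0) :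
    ∃ m n : ℤ, IsShortestLatticeVec v w m n := by
  have hv : v ≠ 0 := by rintro rfl; simp at hD
  have hv_mem : ((1 : ℤ), (0 : ℤ)) ∈
      {p : ℤ × ℤ | (p.1 : ℂ) * v + p.2 * w ≠ 0 ∧ ‖(p.1 : ℂ) * v + p.2 * w‖ ≤ ‖v‖} := by
    simpa using hv
  obtain ⟨⟨m, n⟩, ⟨hne, -⟩, hmin⟩ := Set.exists_min_image _ (fun p => ‖(p.1 : ℂ) * v + p.2 * w‖)
    ((finite_setOf_norm_lattice_le hD ‖v‖).subset fun _ hp => hp.2) ⟨_, hv_mem⟩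
  refine ⟨m, n, hne, fun p q hpq => ?_⟩
  by_cases hle : ‖(p : ℂ) * v + q * w‖ ≤ ‖v‖
  · exact hmin (p, q) ⟨hpq, hle⟩
  · exact (hmin _ hv_mem).trans (by simpa using (not_le.mp hle).le)

theorem IsShortestLatticeVec.isCoprime {m n : ℤ} (h : IsShortestLatticeVec v w m n) :
    IsCoprime m n := by
  rw [Int.isCoprime_iff_gcd_eq_one]
  obtain ⟨m', hm⟩ := Int.gcd_dvd_left m n
  obtain ⟨n', hn⟩ := Int.gcd_dvd_right m n
  generalize Int.gcd m n = g at hm hn ⊢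
  subst hm hn
  obtain ⟨hne, hmin⟩ := h
  have hx : ((g * m' : ℤ) : ℂ) * v + (g * n' : ℤ) * w = g * ((m' : ℂ) * v + n' * w) := by
    push_cast
    ring
  rw [hx] at hne hmin
  have hx' : (m' : ℂ) * v + n' * w ≠ 0 := right_ne_zero_of_mul hne
  have hg0 : g ≠ 0 := by rintro rfl; simp at hne
  have hg1 : (g : ℝ) ≤ 1 := by
    have := hmin m' n' hx'
    rw [norm_mul, Complex.norm_natCast] at this
    nlinarith [norm_pos_iff.mpr hx']
  have : g ≤ 1 := by exact_mod_cast hg1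
  omega

theorem exists_reduced_lattice_basis (hD : (conj v * w).im ≠ 0) :
    ∃ m n p q : ℤ, m * q - n * p = 1 ∧ IsShortestLatticeVec v w m n ∧
      |(conj ((m : ℂ) * v + n * w) * (p * v + q * w)).re| ≤ ‖(m : ℂ) * v + n * w‖ ^ 2 / 2 := by
  obtain ⟨m, n, hshort⟩ := exists_isShortestLatticeVec hD
  obtain ⟨a, b, hab⟩ := hshort.isCoprime
  obtain ⟨k, hk⟩ := exists_abs_re_conj_mul_add_intCast_mul_le hshort.1 (-b * v + a * w)
  refine ⟨m, n, -b + k * m, a + k * n, by linear_combination hab, hshort, ?_⟩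
  convert hk using 4
  push_cast
  ring

end Lattice

/-- Hermite/Loewner bound in dimension 2: for a lattice `L ⊂ ℂ` spanned by two
`ℝ`-linearly independent vectors `v, w`, the least norm `λ₁(L)` of a nonzero lattice
vector satisfies `λ₁(L)² ≤ (2/√3) · area(ℂ/L)`. -/
theorem hermite_bound_dim_two (v w : ℂ) (hvw : LinearIndependent ℝ ![v, w]) :
    (sInf {r : ℝ | ∃ m n : ℤ, (m : ℂ) * v + (n : ℂ) * w ≠ 0 ∧
        ‖(m : ℂ) * v + (n : ℂ) * w‖ = r}) ^ 2 ≤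
      (2 / Real.sqrt 3) * |v.re * w.im - v.im * w.re| := by
  have hD := hvw.im_conj_mul_ne_zero
  obtain ⟨m, n, p, q, hdet, hshort, hre⟩ := exists_reduced_lattice_basis hD
  have hcross : (conj ((m : ℂ) * v + n * w) * (p * v + q * w)).im = (conj v * w).im := by
    rw [im_conj_lattice_mul_lattice, show (m * q - n * p : ℝ) = 1 by exact_mod_cast hdet, one_mul]
  have hy : (p : ℂ) * v + q * w ≠ 0 := by
    intro h
    rw [h, mul_zero, zero_im] at hcross
    exact hD hcross.symm
  have hinf : sInf {r : ℝ | ∃ m n : ℤ, (m : ℂ) * v + (n : ℂ) * w ≠ 0 ∧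
      ‖(m : ℂ) * v + (n : ℂ) * w‖ = r} ≤ ‖(m : ℂ) * v + n * w‖ :=
    csInf_le ⟨0, fun _ ⟨_, _, _, hr⟩ => hr ▸ norm_nonneg _⟩ ⟨m, n, hshort.1, rfl⟩
  calc _ ≤ ‖(m : ℂ) * v + n * w‖ ^ 2 := by
        gcongr
        exact Real.sInf_nonneg fun _ ⟨_, _, _, hr⟩ => hr ▸ norm_nonneg _
    _ ≤ 2 / √3 * |(conj v * w).im| := hcross ▸ sq_norm_le_of_abs_re_conj_mul_le (hshort.2 p q hy) hre
    _ = 2 / √3 * |v.re * w.im - v.im * w.re| := by simp [sub_eq_add_neg]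
end

section
/- Let L ⊂ C be a lattice such that λ₁(L)² = (2/√3) · area(C/L). Then there exists a nonzero complex number z such that z·L equals the lattice spanned by 1 and e^{iπ/3} (the Eisenstein lattice generated by sixth roots of unity). -/
/-!
Take a shortest nonzero vector `a` of the lattice `L`. Minimality makes `a` primitive, so it
extends to a basis `(a, τ a)` of `L`, and translating `τ` by an integer we may assume
`|Re τ| ≤ 1/2`. Minimality of `a` also gives `|τ| ≥ 1`, while `|Im τ| ‖a‖² = area(ℂ/L)`.
The equality `‖a‖² = (2/√3) area(ℂ/L)` says `|Im τ| = √3/2`, and then `|τ| ≥ 1` forces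
`|Re τ| = 1/2`: `τ` is `±e^{iπ/3}` up to an integer, so `a⁻¹ L = ℤ + ℤ e^{iπ/3}`.
-/

open Complex Submodule

theorem Submodule.span_pair_eq_of_isUnit_det {R M : Type*} [CommRing R] [AddCommGroup M]
    [Module R M] {x y : M} {p q r s : R} (h : IsUnit (p * s - q * r)) :
    span R {p • x + q • y, r • x + s • y} = span R {x, y} := by
  obtain ⟨u, hu⟩ := h
  have hinv : ↑u⁻¹ * (p * s - q * r) = 1 := by rw [← hu, Units.inv_mul]
  refine le_antisymm (span_le.2 ?_) (span_le.2 ?_) <;>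
    simp only [Set.insert_subset_iff, Set.singleton_subset_iff, SetLike.mem_coe, mem_span_pair]
  · exact ⟨⟨p, q, rfl⟩, ⟨r, s, rfl⟩⟩
  · exact ⟨⟨↑u⁻¹ * s, -(↑u⁻¹ * q), by linear_combination (norm := module) hinv • x⟩,
      ⟨-(↑u⁻¹ * r), ↑u⁻¹ * p, by linear_combination (norm := module) hinv • y⟩⟩

theorem Submodule.mem_span_int_pair_iff {R : Type*} [Ring R] {v w x : R} :
    x ∈ span ℤ {v, w} ↔ ∃ m n : ℤ, x = m * v + n * w := by
  simp only [mem_span_pair, zsmul_eq_mul, eq_comm]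

theorem Submodule.span_int_pair_mul_eq {R : Type*} [CommRing R] (a σ : R) {ε : ℤ} (k : ℤ)
    (hε : IsUnit ε) : span ℤ {a, (ε * σ + k) * a} = span ℤ {a, σ * a} := by
  have h := span_pair_eq_of_isUnit_det (x := a) (y := σ * a) (p := 1) (q := 0) (r := k) (s := ε)
    (by simpa using hε)
  rwa [one_smul, zero_smul, add_zero, zsmul_eq_mul, zsmul_eq_mul, ← mul_assoc, ← add_mul,
    add_comm] at h

theorem Submodule.exists_ne_zero_forall_norm_le {E : Type*} [NormedAddCommGroup E] [ProperSpace E]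
    (L : Submodule ℤ E) [DiscreteTopology L] (hL : L ≠ ⊥) :
    ∃ a ∈ L, a ≠ 0 ∧ ∀ x ∈ L, x ≠ 0 → ‖a‖ ≤ ‖x‖ := by
  obtain ⟨x₀, hx₀L, hx₀⟩ := L.ne_bot_iff.1 hL
  have hfin : (Metric.closedBall 0 ‖x₀‖ ∩ ((L : Set E) \ {0})).Finite :=
    (Metric.finite_isBounded_inter_isClosed (s := L.toAddSubgroup)
      (isDiscrete_iff_discreteTopology.2 ‹_›) Metric.isBounded_closedBall
      AddSubgroup.isClosed_of_discrete).subset (Set.inter_subset_inter_right _ Set.sdiff_subset)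
  obtain ⟨a, ⟨-, haL, ha0⟩, hmin⟩ := Set.exists_min_image _ norm hfin ⟨x₀, by simp, hx₀L, hx₀⟩
  refine ⟨a, haL, ha0, fun x hxL hx0 => ?_⟩
  rcases le_total ‖x‖ ‖x₀‖ with hx | hx
  · exact hmin x ⟨by simpa using hx, hxL, hx0⟩
  · exact (hmin x₀ ⟨by simp, hx₀L, hx₀⟩).trans hx

theorem isCoprime_of_forall_norm_le {E : Type*} [NormedAddCommGroup E] [NormedSpace ℝ E]
    {L : Submodule ℤ E} {v w : E} (hv : v ∈ L) (hw : w ∈ L) {p q : ℤ}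
    (hmin : ∀ x ∈ L, x ≠ 0 → ‖p • v + q • w‖ ≤ ‖x‖) (ha0 : p • v + q • w ≠ 0) :
    IsCoprime p q := by
  obtain ⟨p', hp⟩ := Int.gcd_dvd_left p q
  obtain ⟨q', hq⟩ := Int.gcd_dvd_right p q
  set g : ℤ := (Int.gcd p q : ℤ)
  have hfactor : p • v + q • w = g • (p' • v + q' • w) := by
    rw [hp, hq, smul_add, mul_smul, mul_smul]
  rw [hfactor] at hmin ha0
  have ha'0 : p' • v + q' • w ≠ 0 := fun h => ha0 (by rw [h, smul_zero])
  have hg0 : g ≠ 0 := fun h => ha0 (by rw [h, zero_smul])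
  have hle := hmin _ (L.add_mem (L.smul_mem p' hv) (L.smul_mem q' hw)) ha'0
  rw [norm_zsmul ℝ, mul_le_iff_le_one_left (norm_pos_iff.2 ha'0), Real.norm_eq_abs,
    ← Int.cast_abs, ← Int.cast_one, Int.cast_le, abs_le] at hle
  rw [Int.isCoprime_iff_gcd_eq_one]
  omega

theorem sInf_norm_eq_of_forall_norm_le {R : Type*} [NormedRing R] {v w a : R}
    (ha : a ∈ span ℤ {v, w}) (ha0 : a ≠ 0) (hmin : ∀ x ∈ span ℤ {v, w}, x ≠ 0 → ‖a‖ ≤ ‖x‖) :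
    sInf {r : ℝ | ∃ m n : ℤ, (m : R) * v + (n : R) * w ≠ 0 ∧ ‖(m : R) * v + (n : R) * w‖ = r} =
      ‖a‖ := by
  refine IsLeast.csInf_eq ⟨?_, ?_⟩
  · obtain ⟨m, n, rfl⟩ := mem_span_int_pair_iff.1 ha
    exact ⟨m, n, ha0, rfl⟩
  · rintro r ⟨m, n, hne, rfl⟩
    exact hmin _ (mem_span_int_pair_iff.2 ⟨m, n, rfl⟩) hne

theorem setOf_inv_mul_eq_of_span_eq {K : Type*} [Field K] {v w a ω : K} (ha : a ≠ 0)
    (h : span ℤ {v, w} = span ℤ {a, ω * a}) :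
    {x : K | ∃ m n : ℤ, x = a⁻¹ * ((m : K) * v + (n : K) * w)} =
      {x : K | ∃ m n : ℤ, x = (m : K) * 1 + (n : K) * ω} := by
  ext x
  have hmem : (∃ m n : ℤ, x = a⁻¹ * (m * v + n * w)) ↔ a * x ∈ span ℤ {v, w} := by
    simp only [mem_span_int_pair_iff, eq_inv_mul_iff_mul_eq₀ ha]
  simp only [Set.mem_ofPred_eq, hmem, h, mem_span_int_pair_iff]
  refine exists₂_congr fun m n => ?_
  rw [show (m : K) * a + n * (ω * a) = a * (m * 1 + n * ω) by ring, mul_right_inj' ha]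

namespace Complex

theorem discreteTopology_span_int_pair {v w : ℂ} (hvw : LinearIndependent ℝ ![v, w]) :
    DiscreteTopology (span ℤ {v, w}) := by
  let b := basisOfLinearIndependentOfCardEqFinrank hvw (by simp)
  have hb : Set.range b = {v, w} := by
    rw [coe_basisOfLinearIndependentOfCardEqFinrank, Matrix.range_cons_cons_empty]
  rw [← hb]
  infer_instance

theorem im_div_mul_normSq (a b : ℂ) : (b / a).im * normSq a = a.re * b.im - a.im * b.re := by
  rcases eq_or_ne a 0 with rfl | ha
  · simp
  rw [div_im]
  field_simp [(normSq_pos.2 ha).ne']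

theorem exists_span_int_pair_mul_eq {v w a : ℂ} (ha : a ∈ span ℤ {v, w}) (ha0 : a ≠ 0)
    (hmin : ∀ x ∈ span ℤ {v, w}, x ≠ 0 → ‖a‖ ≤ ‖x‖) :
    ∃ τ : ℂ, span ℤ {a, τ * a} = span ℤ {v, w} ∧ |τ.re| ≤ 1 / 2 ∧
      τ.im * normSq a = v.re * w.im - v.im * w.re := by
  obtain ⟨p, q, rfl⟩ := mem_span_pair.1 ha
  set a := p • v + q • w
  obtain ⟨s, r, hsr⟩ := isCoprime_of_forall_norm_le (subset_span (by simp))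
    (subset_span (by simp)) hmin ha0
  set b := (-r) • v + s • w
  have hbasis : span ℤ {a, b} = span ℤ {v, w} :=
    span_pair_eq_of_isUnit_det ((show p * s - q * -r = 1 by linear_combination hsr) ▸ isUnit_one)
  have hdet : (b / a).im * normSq a = v.re * w.im - v.im * w.re := by
    rw [im_div_mul_normSq]
    simp only [a, b, add_re, add_im, zsmul_eq_mul, mul_re, mul_im, intCast_re, intCast_im]
    have hsr' : (s : ℝ) * p + r * q = 1 := by exact_mod_cast hsr
    push_cast
    linear_combination (v.re * w.im - v.im * w.re) * hsr'
  have hshift : span ℤ {a, (b / a - round (b / a).re) * a} = span ℤ {a, b / a * a} := by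
    simpa [← sub_eq_add_neg] using span_int_pair_mul_eq a (b / a) (-round (b / a).re) isUnit_one
  refine ⟨b / a - round (b / a).re, ?_, abs_sub_round _, ?_⟩
  · rw [hshift, div_mul_cancel₀ b ha0, hbasis]
  · rw [sub_im, intCast_im, sub_zero, hdet]

theorem exp_pi_mul_I_div_three : exp (Real.pi * I / 3) = 1 / 2 + √3 / 2 * I := by
  rw [show Real.pi * I / 3 = (Real.pi / 3 : ℝ) * I by push_cast; ring, exp_mul_I, ← ofReal_cos,
    ← ofReal_sin, Real.cos_pi_div_three, Real.sin_pi_div_three]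
  push_cast; ring

theorem exists_eq_unit_mul_exp_add_intCast {τ : ℂ} (hre : |τ.re| ≤ 1 / 2) (hnorm : 1 ≤ ‖τ‖)
    (him : |τ.im| = √3 / 2) : ∃ ε k : ℤ, IsUnit ε ∧ τ = ε * exp (Real.pi * I / 3) + k := by
  have hsq : τ.re ^ 2 + τ.im ^ 2 = ‖τ‖ ^ 2 := by rw [Complex.sq_norm, normSq_apply]; ring
  have hre' : |τ.re| = 1 / 2 := by
    have : τ.im ^ 2 = 3 / 4 := by rw [← sq_abs, him, div_pow, Real.sq_sqrt (by norm_num)]; norm_num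
    nlinarith [sq_abs τ.re, abs_nonneg τ.re]
  rw [exp_pi_mul_I_div_three]
  rcases abs_eq (by norm_num) |>.1 hre' with hr | hr <;>
    rcases abs_eq (by positivity) |>.1 him with hi | hi
  · exact ⟨1, 0, isUnit_one, Complex.ext (by simp [hr]) (by simp [hi])⟩
  · exact ⟨-1, 1, isUnit_one.neg, Complex.ext (by simp [hr]; norm_num) (by simp [hi])⟩
  · exact ⟨1, -1, isUnit_one, Complex.ext (by simp [hr]; norm_num) (by simp [hi])⟩
  · exact ⟨-1, 0, isUnit_one.neg, Complex.ext (by simp [hr]) (by simp [hi])⟩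

end Complex

/-- Equality case of the Hermite bound in dimension 2: a lattice `L ⊂ ℂ` with
`λ₁(L)² = (2/√3) · area(ℂ/L)` is homothetic to the Eisenstein lattice spanned by
`1` and `e^{iπ/3}`. -/
theorem hermite_equality_dim_two (v w : ℂ) (hvw : LinearIndependent ℝ ![v, w])
    (heq : (sInf {r : ℝ | ∃ m n : ℤ, (m : ℂ) * v + (n : ℂ) * w ≠ 0 ∧
        ‖(m : ℂ) * v + (n : ℂ) * w‖ = r}) ^ 2 =
      (2 / Real.sqrt 3) * |v.re * w.im - v.im * w.re|) :
    ∃ z : ℂ, z ≠ 0 ∧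
      {x : ℂ | ∃ m n : ℤ, x = z * ((m : ℂ) * v + (n : ℂ) * w)} =
      {x : ℂ | ∃ m n : ℤ, x = (m : ℂ) * 1 + (n : ℂ) * Complex.exp (Real.pi * I / 3)} := by
  have := discreteTopology_span_int_pair hvw
  obtain ⟨a, haL, ha0, hmin⟩ := (span ℤ {v, w}).exists_ne_zero_forall_norm_le
    ((Submodule.ne_bot_iff _).2 ⟨v, subset_span (by simp), by simpa using hvw.ne_zero 0⟩)
  obtain ⟨τ, hspan, hre, hdet⟩ := exists_span_int_pair_mul_eq haL ha0 hmin
  have him : |τ.im| = √3 / 2 := by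
    rw [sInf_norm_eq_of_forall_norm_le haL ha0 hmin, ← hdet, abs_mul,
      abs_of_nonneg (normSq_nonneg a), normSq_eq_norm_sq] at heq
    field_simp at heq
    linarith
  have hnorm : 1 ≤ ‖τ‖ := by
    have hτ0 : τ ≠ 0 := by
      rintro rfl
      rw [zero_im, abs_zero] at him
      exact (by positivity : (0 : ℝ) < √3 / 2).ne him
    have := hmin _ (hspan ▸ subset_span (by simp)) (mul_ne_zero hτ0 ha0)
    rwa [norm_mul, le_mul_iff_one_le_left (norm_pos_iff.2 ha0)] at this
  obtain ⟨ε, k, hε, rfl⟩ := exists_eq_unit_mul_exp_add_intCast hre hnorm him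
  refine ⟨a⁻¹, inv_ne_zero ha0, setOf_inv_mul_eq_of_span_eq ha0 ?_⟩
  rw [← hspan, span_int_pair_mul_eq _ _ _ hε]
end

section
/- For every full-rank lattice L in Euclidean space R^b, λ₁(L) ≤ √γ_b · covol(L)^{1/b} where γ₂ = 2/√3; in particular for b = 2, the hexagonal lattice spanned by 1 and e^{2πi/3} (after scaling to unit covolume) attains λ₁(L)² / covol(L) = 2/√3, so the supremum defining γ₂ is attained. -/
/-- Covolume of the lattice spanned by `v` (absolute determinant of the basis). -/
noncomputable def latticeCovol {b : ℕ} (v : Fin b → EuclideanSpace ℝ (Fin b)) : ℝ :=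
  |(Matrix.of fun i j => v i j).det|

/-- First successive minimum: least norm of a nonzero vector of the lattice spanned by `v`. -/
noncomputable def latticeLambda1 {b : ℕ} (v : Fin b → EuclideanSpace ℝ (Fin b)) : ℝ :=
  sInf {r : ℝ | ∃ m : Fin b → ℤ,
    (∑ i, (m i : ℝ) • v i) ≠ 0 ∧ ‖∑ i, (m i : ℝ) • v i‖ = r}

/-- The Hermite constant `γ_b`, as the supremum of `λ₁(L)²/covol(L)^{2/b}` over
full-rank lattices `L ⊂ ℝ^b`. -/
noncomputable def hermiteConstant (b : ℕ) : ℝ :=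
  sSup {r : ℝ | ∃ v : Fin b → EuclideanSpace ℝ (Fin b), LinearIndependent ℝ v ∧
    r = latticeLambda1 v ^ 2 / latticeCovol v ^ ((2 : ℝ) / b)}

/-!
Minkowski's convex body theorem, applied to the cube `[-a, a]ᵇ` with `aᵇ = covol L`, yields a
nonzero lattice vector of norm at most `√b · covol(L)^{1/b}`; hence `γ_b ≤ b` is finite and every
lattice satisfies `λ₁(L) ≤ √γ_b · covol(L)^{1/b}`.

In dimension 2 a shortest vector `u` is primitive, so by Bézout it extends to a basis `(u, w)` of
the lattice. Replacing `w` by `w - k u` for the integer `k` nearest to `⟪u, w⟫ / ‖u‖²` gives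
`|⟪u, w⟫| ≤ ‖u‖² / 2` while still `‖w‖ ≥ ‖u‖ = λ₁`, so Lagrange's identity
`covol² = ‖u‖²‖w‖² - ⟪u, w⟫²` gives `covol² ≥ 3λ₁⁴/4`. The hexagonal lattice has covolume `√3/2`
and `λ₁ = 1`, because its norm form `m² - mn + n²` is a positive integer on nonzero vectors;
so it attains `γ₂ = 2/√3`.
-/

open MeasureTheory Submodule
open scoped RealInnerProductSpace

section Lattice

variable {b : ℕ}

def latticeVector (v : Fin b → EuclideanSpace ℝ (Fin b)) :
    (Fin b → ℤ) →+ EuclideanSpace ℝ (Fin b) :=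
  (Fintype.linearCombination ℤ v).toAddMonoidHom

variable {v : Fin b → EuclideanSpace ℝ (Fin b)}

lemma latticeVector_apply (m : Fin b → ℤ) : latticeVector v m = ∑ i, (m i : ℝ) • v i := by
  simp [latticeVector, Fintype.linearCombination_apply, Int.cast_smul_eq_zsmul]

lemma mem_span_int_iff_exists_latticeVector {x : EuclideanSpace ℝ (Fin b)} :
    x ∈ span ℤ (Set.range v) ↔ ∃ m, latticeVector v m = x := by
  rw [← Fintype.range_linearCombination]
  rfl

lemma latticeLambda1_eq_sInf :
    latticeLambda1 v = sInf {r | ∃ m, latticeVector v m ≠ 0 ∧ ‖latticeVector v m‖ = r} := by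
  simp only [latticeLambda1, latticeVector_apply]

lemma latticeLambda1_nonneg : 0 ≤ latticeLambda1 v :=
  Real.sInf_nonneg fun _ ⟨_, _, hm⟩ ↦ hm ▸ norm_nonneg _

lemma latticeLambda1_le_norm {m : Fin b → ℤ} (hm : latticeVector v m ≠ 0) :
    latticeLambda1 v ≤ ‖latticeVector v m‖ := by
  rw [latticeLambda1_eq_sInf]
  exact csInf_le ⟨0, fun _ ⟨_, _, h⟩ ↦ h ▸ norm_nonneg _⟩ ⟨m, hm, rfl⟩

lemma latticeCovol_nonneg : 0 ≤ latticeCovol v := abs_nonneg _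

lemma linearIndependent_iff_latticeCovol_pos :
    LinearIndependent ℝ v ↔ 0 < latticeCovol v := by
  classical
  rw [latticeCovol, abs_pos, ← isUnit_iff_ne_zero, ← Matrix.isUnit_iff_isUnit_det,
    ← Matrix.linearIndependent_rows_iff_isUnit,
    ← LinearMap.linearIndependent_iff (WithLp.linearEquiv 2 ℝ (Fin b → ℝ)).toLinearMap
      (LinearEquiv.ker _)]
  rfl

lemma exists_basis_coe_eq (hb : 0 < b) (hv : LinearIndependent ℝ v) :
    ∃ B : Module.Basis (Fin b) ℝ (EuclideanSpace ℝ (Fin b)), ⇑B = v :=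
  have : Nonempty (Fin b) := ⟨⟨0, hb⟩⟩
  ⟨basisOfLinearIndependentOfCardEqFinrank hv (by simp),
    coe_basisOfLinearIndependentOfCardEqFinrank _ _⟩

lemma exists_latticeVector_norm_eq_latticeLambda1 (hb : 0 < b) (hv : LinearIndependent ℝ v) :
    ∃ m, latticeVector v m ≠ 0 ∧ ‖latticeVector v m‖ = latticeLambda1 v := by
  obtain ⟨B, rfl⟩ := exists_basis_coe_eq hb hv
  set i₀ : Fin b := ⟨0, hb⟩
  set S : Set (EuclideanSpace ℝ (Fin b)) :=
    (Metric.closedBall 0 ‖B i₀‖ ∩ span ℤ (Set.range B)) \ {0}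
  have hS : S.Finite := (ZSpan.setFinite_inter B Metric.isBounded_closedBall).sdiff
  have hi₀ : B i₀ ∈ S := ⟨⟨by simp, subset_span ⟨i₀, rfl⟩⟩, B.ne_zero i₀⟩
  obtain ⟨x, ⟨⟨hxR, hxL⟩, hx0⟩, hmin⟩ := S.exists_min_image norm hS ⟨_, hi₀⟩
  obtain ⟨m, rfl⟩ := mem_span_int_iff_exists_latticeVector.1 hxL
  have hleast : IsLeast {r | ∃ m, latticeVector B m ≠ 0 ∧ ‖latticeVector B m‖ = r}
      ‖latticeVector B m‖ := by
    refine ⟨⟨m, hx0, rfl⟩, ?_⟩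
    rintro _ ⟨n, hn0, rfl⟩
    by_cases h : ‖latticeVector B n‖ ≤ ‖B i₀‖
    · exact hmin (latticeVector B n)
        ⟨⟨by simpa using h, mem_span_int_iff_exists_latticeVector.2 ⟨n, rfl⟩⟩, hn0⟩
    · exact (mem_closedBall_zero_iff.1 hxR).trans (not_le.1 h).le
  exact ⟨m, hx0, by rw [latticeLambda1_eq_sInf, hleast.csInf_eq]⟩

lemma volume_fundamentalDomain_eq_latticeCovol
    (B : Module.Basis (Fin b) ℝ (EuclideanSpace ℝ (Fin b))) :
    volume (ZSpan.fundamentalDomain B) = ENNReal.ofReal (latticeCovol B) := by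
  set B₀ := (EuclideanSpace.basisFun (Fin b) ℝ).toBasis
  have hB₀ : volume (ZSpan.fundamentalDomain B₀) = 1 := by
    rw [measure_congr (ZSpan.fundamentalDomain_ae_parallelepiped B₀ volume),
      OrthonormalBasis.coe_toBasis]
    exact (EuclideanSpace.basisFun (Fin b) ℝ).volume_parallelepiped
  have hM : B₀.toMatrix B = (Matrix.of fun i j ↦ B i j).transpose := by
    ext i j
    simp [B₀, Module.Basis.toMatrix_apply]
  rw [ZSpan.measure_fundamentalDomain B volume B₀, hB₀, mul_one, Module.Basis.det_apply, hM,
    Matrix.det_transpose, latticeCovol]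

lemma norm_le_sqrt_card_mul_norm_ofLp (x : EuclideanSpace ℝ (Fin b)) :
    ‖x‖ ≤ √b * ‖WithLp.ofLp x‖ := by
  calc ‖x‖ = √(∑ i, ‖x i‖ ^ 2) := EuclideanSpace.norm_eq x
    _ ≤ √(∑ _i : Fin b, ‖WithLp.ofLp x‖ ^ 2) := by
        gcongr with i
        exact norm_le_pi_norm (WithLp.ofLp x) i
    _ = √b * ‖WithLp.ofLp x‖ := by simp [Real.sqrt_mul, Real.sqrt_sq]

lemma exists_latticeVector_norm_le_sqrt_mul_covol_rpow (hb : 0 < b)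
    (hv : LinearIndependent ℝ v) :
    ∃ m, latticeVector v m ≠ 0 ∧ ‖latticeVector v m‖ ≤ √b * latticeCovol v ^ ((1 : ℝ) / b) := by
  obtain ⟨B, rfl⟩ := exists_basis_coe_eq hb hv
  have : Nontrivial (EuclideanSpace ℝ (Fin b)) := by
    have : Nonempty (Fin b) := ⟨⟨0, hb⟩⟩
    infer_instance
  have : Countable (span ℤ (Set.range B)).toAddSubgroup :=
    inferInstanceAs (Countable (span ℤ (Set.range B)))
  have hab : (latticeCovol B ^ ((1 : ℝ) / b)) ^ b = latticeCovol B := by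
    rw [one_div]
    exact Real.rpow_inv_natCast_pow latticeCovol_nonneg hb.ne'
  set a := latticeCovol B ^ ((1 : ℝ) / b)
  have ha : 0 ≤ a := Real.rpow_nonneg latticeCovol_nonneg _
  -- `s` is the cube `[-a, a]ᵇ`: the preimage of a ball for the sup norm of `Fin b → ℝ`.
  set s : Set (EuclideanSpace ℝ (Fin b)) := WithLp.ofLp ⁻¹' Metric.closedBall 0 a
  have hcube : ENNReal.ofReal ((2 * a) ^ b) = ENNReal.ofReal (latticeCovol B) * 2 ^ b := by
    rw [mul_pow, hab, ENNReal.ofReal_mul (by positivity), mul_comm]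
    simp
  have hvol : volume (ZSpan.fundamentalDomain B) *
      2 ^ Module.finrank ℝ (EuclideanSpace ℝ (Fin b)) ≤ volume s := by
    rw [(PiLp.volume_preserving_ofLp (Fin b)).measure_preimage
        measurableSet_closedBall.nullMeasurableSet,
      Real.volume_pi_closedBall _ ha, volume_fundamentalDomain_eq_latticeCovol,
      finrank_euclideanSpace, Fintype.card_fin, hcube]
  obtain ⟨⟨x, hxL⟩, hx0, hxs⟩ := exists_ne_zero_mem_lattice_of_measure_mul_two_pow_le_measure
    (ZSpan.isAddFundamentalDomain' B volume) (fun x hx ↦ by simpa [s] using hx)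
    ((convex_closedBall 0 a).linear_preimage (WithLp.linearEquiv 2 ℝ (Fin b → ℝ)).toLinearMap)
    ((PiLp.homeomorph 2 _).isCompact_preimage.2 (isCompact_closedBall 0 a)) hvol
  obtain ⟨m, rfl⟩ := mem_span_int_iff_exists_latticeVector.1 hxL
  exact ⟨m, fun h ↦ hx0 (Subtype.ext h), (norm_le_sqrt_card_mul_norm_ofLp _).trans
    (mul_le_mul_of_nonneg_left (mem_closedBall_zero_iff.1 hxs) (Real.sqrt_nonneg _))⟩

lemma latticeLambda1_le_sqrt_mul_covol_rpow (hb : 0 < b) (hv : LinearIndependent ℝ v) :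
    latticeLambda1 v ≤ √b * latticeCovol v ^ ((1 : ℝ) / b) :=
  let ⟨_, hm0, hm⟩ := exists_latticeVector_norm_le_sqrt_mul_covol_rpow hb hv
  (latticeLambda1_le_norm hm0).trans hm

lemma sq_div_le_iff_le_sqrt_mul {l c γ : ℝ} (hl : 0 ≤ l) (hc : 0 < c) (hγ : 0 ≤ γ) :
    l ^ 2 / c ^ 2 ≤ γ ↔ l ≤ √γ * c := by
  rw [← div_pow, ← Real.le_sqrt (by positivity) hγ, div_le_iff₀ hc]

lemma latticeCovol_rpow_two_div :
    latticeCovol v ^ ((2 : ℝ) / b) = (latticeCovol v ^ ((1 : ℝ) / b)) ^ 2 := by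
  rw [← Real.rpow_mul_natCast latticeCovol_nonneg]
  ring_nf

lemma latticeLambda1_sq_div_le_hermiteConstant (hb : 0 < b) (hv : LinearIndependent ℝ v) :
    latticeLambda1 v ^ 2 / latticeCovol v ^ ((2 : ℝ) / b) ≤ hermiteConstant b := by
  refine le_csSup ⟨b, ?_⟩ ⟨v, hv, rfl⟩
  rintro _ ⟨w, hw, rfl⟩
  have hc : 0 < latticeCovol w ^ ((1 : ℝ) / b) :=
    Real.rpow_pos_of_pos (linearIndependent_iff_latticeCovol_pos.1 hw) _
  rw [latticeCovol_rpow_two_div, sq_div_le_iff_le_sqrt_mul latticeLambda1_nonneg hc b.cast_nonneg]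
  exact latticeLambda1_le_sqrt_mul_covol_rpow hb hw

lemma latticeLambda1_le_sqrt_hermiteConstant_mul (hb : 0 < b) (hv : LinearIndependent ℝ v) :
    latticeLambda1 v ≤ √(hermiteConstant b) * latticeCovol v ^ ((1 : ℝ) / b) := by
  have hc : 0 < latticeCovol v ^ ((1 : ℝ) / b) :=
    Real.rpow_pos_of_pos (linearIndependent_iff_latticeCovol_pos.1 hv) _
  have hγ := latticeLambda1_sq_div_le_hermiteConstant hb hv
  rw [latticeCovol_rpow_two_div] at hγ
  exact (sq_div_le_iff_le_sqrt_mul latticeLambda1_nonneg hc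
    ((div_nonneg (sq_nonneg _) (sq_nonneg _)).trans hγ)).1 hγ

lemma isUnit_of_norm_latticeVector_zsmul_eq {g : ℤ} {q : Fin b → ℤ}
    (h0 : latticeVector v (g • q) ≠ 0) (h : ‖latticeVector v (g • q)‖ = latticeLambda1 v) :
    IsUnit g := by
  rw [map_zsmul] at h0 h
  have hq0 : latticeVector v q ≠ 0 := right_ne_zero_of_smul h0
  have hle := h ▸ latticeLambda1_le_norm hq0
  rw [← Int.cast_smul_eq_zsmul ℝ, norm_smul, Real.norm_eq_abs] at hle
  have hg1 : |g| ≤ 1 := by exact_mod_cast (mul_le_iff_le_one_left (norm_pos_iff.2 hq0)).1 hle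
  exact Int.isUnit_iff_abs_eq.2 (le_antisymm hg1 (Int.one_le_abs (left_ne_zero_of_smul h0)))

end Lattice

lemma exists_abs_inner_sub_zsmul_le {F : Type*} [NormedAddCommGroup F] [InnerProductSpace ℝ F]
    (u w : F) : ∃ k : ℤ, |⟪u, w - k • u⟫| ≤ ‖u‖ ^ 2 / 2 := by
  rcases eq_or_ne u 0 with rfl | hu
  · exact ⟨0, by simp⟩
  have hu2 : 0 < ‖u‖ ^ 2 := by positivity
  set k := round (⟪u, w⟫ / ‖u‖ ^ 2)
  have hk : ⟪u, w - k • u⟫ = (⟪u, w⟫ / ‖u‖ ^ 2 - k) * ‖u‖ ^ 2 := by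
    rw [← Int.cast_smul_eq_zsmul ℝ, inner_sub_right, real_inner_smul_right,
      real_inner_self_eq_norm_sq]
    field_simp
  refine ⟨k, ?_⟩
  rw [hk, abs_mul, abs_of_pos hu2]
  nlinarith [abs_sub_round (⟪u, w⟫ / ‖u‖ ^ 2)]

lemma sq_le_two_div_sqrt_three_mul {l n t d : ℝ} (hl : 0 ≤ l) (hln : l ≤ n)
    (ht : |t| ≤ l ^ 2 / 2) (hd : 0 ≤ d) (h : d ^ 2 + t ^ 2 = l ^ 2 * n ^ 2) :
    l ^ 2 ≤ 2 / √3 * d := by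
  have ht2 : t ^ 2 ≤ (l ^ 2 / 2) ^ 2 := sq_abs t ▸ pow_le_pow_left₀ (abs_nonneg t) ht 2
  have hn2 : l ^ 2 * l ^ 2 ≤ l ^ 2 * n ^ 2 :=
    mul_le_mul_of_nonneg_left (pow_le_pow_left₀ hl hln 2) (sq_nonneg l)
  have h3 : (√3 * l ^ 2) ^ 2 ≤ (2 * d) ^ 2 := by
    rw [mul_pow, Real.sq_sqrt zero_le_three]
    nlinarith
  rw [div_mul_eq_mul_div, le_div_iff₀ (by positivity), mul_comm]
  exact (pow_le_pow_iff_left₀ (by positivity) (by positivity) two_ne_zero).1 h3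

section Dimension2

lemma latticeCovol_sq_add_inner_sq (x y : EuclideanSpace ℝ (Fin 2)) :
    latticeCovol ![x, y] ^ 2 + ⟪x, y⟫ ^ 2 = ‖x‖ ^ 2 * ‖y‖ ^ 2 := by
  rw [latticeCovol, sq_abs, Matrix.det_fin_two, EuclideanSpace.norm_eq, EuclideanSpace.norm_eq,
    Real.sq_sqrt (by positivity), Real.sq_sqrt (by positivity)]
  simp [Fin.sum_univ_two, PiLp.inner_apply]
  ring

variable {v : Fin 2 → EuclideanSpace ℝ (Fin 2)}

lemma latticeCovol_latticeVector_pair (p r : Fin 2 → ℤ) :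
    latticeCovol ![latticeVector v p, latticeVector v r] =
      |((p 0 * r 1 - p 1 * r 0 : ℤ) : ℝ)| * latticeCovol v := by
  simp [latticeCovol, latticeVector_apply, Matrix.det_fin_two, Fin.sum_univ_two, ← abs_mul]
  ring_nf

lemma isCoprime_of_norm_latticeVector_eq {p : Fin 2 → ℤ} (h0 : latticeVector v p ≠ 0)
    (h : ‖latticeVector v p‖ = latticeLambda1 v) : IsCoprime (p 0) (p 1) := by
  set g := Int.gcd (p 0) (p 1)
  have hp : p = (g : ℤ) • ![p 0 / g, p 1 / g] := by
    ext i
    fin_cases i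
    · simp [Int.mul_ediv_cancel' (Int.gcd_dvd_left (p 0) (p 1)), g]
    · simp [Int.mul_ediv_cancel' (Int.gcd_dvd_right (p 0) (p 1)), g]
  rw [hp] at h0 h
  have hg := Int.isUnit_iff.1 (isUnit_of_norm_latticeVector_zsmul_eq h0 h)
  rw [Int.isCoprime_iff_gcd_eq_one]
  omega

theorem latticeLambda1_sq_le_two_div_sqrt_three_mul_latticeCovol (hv : LinearIndependent ℝ v) :
    latticeLambda1 v ^ 2 ≤ 2 / √3 * latticeCovol v := by
  obtain ⟨p, hp0, hp⟩ := exists_latticeVector_norm_eq_latticeLambda1 two_pos hv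
  obtain ⟨a, c, hac⟩ := isCoprime_of_norm_latticeVector_eq hp0 hp
  set u := latticeVector v p
  obtain ⟨k, hk⟩ := exists_abs_inner_sub_zsmul_le u (latticeVector v ![-c, a])
  -- Bézout makes `(p, r)` unimodular, so `u` and `latticeVector v r` again span the lattice.
  set r := ![-c, a] - k • p
  have hr : latticeVector v r = latticeVector v ![-c, a] - k • u := by
    simp only [r, map_sub, map_zsmul, u]
  have hdet : latticeCovol ![u, latticeVector v r] = latticeCovol v := by
    have hpr : p 0 * r 1 - p 1 * r 0 = 1 := by
      simp only [r, Pi.sub_apply, Pi.smul_apply, smul_eq_mul, Matrix.cons_val_zero,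
        Matrix.cons_val_one]
      linear_combination hac
    rw [latticeCovol_latticeVector_pair, hpr, Int.cast_one, abs_one, one_mul]
  have hr0 : latticeVector v r ≠ 0 := by
    intro h0
    have hpos := linearIndependent_iff_latticeCovol_pos.1 hv
    rw [← hdet, h0] at hpos
    simp [latticeCovol, Matrix.det_fin_two] at hpos
  refine sq_le_two_div_sqrt_three_mul latticeLambda1_nonneg (latticeLambda1_le_norm hr0)
    (hp ▸ hr ▸ hk) latticeCovol_nonneg ?_
  rw [← hdet, latticeCovol_sq_add_inner_sq, hp]

end Dimension2

noncomputable def hexagonalLattice : Fin 2 → EuclideanSpace ℝ (Fin 2) :=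
  ![!₂[1, 0], !₂[-(1 / 2), √3 / 2]]

lemma latticeCovol_hexagonalLattice : latticeCovol hexagonalLattice = √3 / 2 := by
  simp [latticeCovol, hexagonalLattice, Matrix.det_fin_two]
  positivity

lemma linearIndependent_hexagonalLattice : LinearIndependent ℝ hexagonalLattice :=
  linearIndependent_iff_latticeCovol_pos.2 (by rw [latticeCovol_hexagonalLattice]; positivity)

lemma norm_latticeVector_hexagonalLattice_sq (m : Fin 2 → ℤ) :
    ‖latticeVector hexagonalLattice m‖ ^ 2 = ((m 0 ^ 2 - m 0 * m 1 + m 1 ^ 2 : ℤ) : ℝ) := by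
  rw [EuclideanSpace.norm_eq, Real.sq_sqrt (by positivity)]
  simp [latticeVector_apply, hexagonalLattice, Fin.sum_univ_two]
  linear_combination ((m 1 : ℝ) ^ 2 / 4) * Real.sq_sqrt (zero_le_three (α := ℝ))

lemma latticeLambda1_hexagonalLattice : latticeLambda1 hexagonalLattice = 1 := by
  refine le_antisymm ?_ ?_
  · have h10 : ‖latticeVector hexagonalLattice ![1, 0]‖ = 1 := by
      rw [← sq_eq_sq₀ (norm_nonneg _) zero_le_one, norm_latticeVector_hexagonalLattice_sq]
      norm_num
    exact (latticeLambda1_le_norm (norm_ne_zero_iff.1 (h10 ▸ one_ne_zero))).trans h10.le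
  · obtain ⟨m, hm0, hm⟩ :=
      exists_latticeVector_norm_eq_latticeLambda1 two_pos linearIndependent_hexagonalLattice
    have hpos := pow_pos (norm_pos_iff.2 hm0) 2
    rw [norm_latticeVector_hexagonalLattice_sq, Int.cast_pos] at hpos
    have h1 : (1 : ℝ) ≤ ‖latticeVector hexagonalLattice m‖ ^ 2 := by
      rw [norm_latticeVector_hexagonalLattice_sq]
      exact_mod_cast hpos
    exact hm ▸ (one_le_sq_iff₀ (norm_nonneg _)).1 h1

lemma latticeLambda1_hexagonalLattice_sq_div_latticeCovol :
    latticeLambda1 hexagonalLattice ^ 2 / latticeCovol hexagonalLattice = 2 / √3 := by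
  rw [latticeLambda1_hexagonalLattice, latticeCovol_hexagonalLattice, one_pow, one_div_div]

theorem hermiteConstant_two : hermiteConstant 2 = 2 / √3 := by
  have hrpow (w : Fin 2 → EuclideanSpace ℝ (Fin 2)) :
      latticeCovol w ^ ((2 : ℝ) / (2 : ℕ)) = latticeCovol w := by norm_num
  refine le_antisymm
    (csSup_le ⟨_, hexagonalLattice, linearIndependent_hexagonalLattice, rfl⟩ ?_) ?_
  · rintro _ ⟨w, hw, rfl⟩
    rw [hrpow, div_le_iff₀ (linearIndependent_iff_latticeCovol_pos.1 hw)]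
    exact latticeLambda1_sq_le_two_div_sqrt_three_mul_latticeCovol hw
  · have h := latticeLambda1_sq_div_le_hermiteConstant two_pos linearIndependent_hexagonalLattice
    rwa [hrpow, latticeLambda1_hexagonalLattice_sq_div_latticeCovol] at h

/-- Every full-rank lattice `L ⊂ ℝ^b` satisfies `λ₁(L) ≤ √γ_b · covol(L)^{1/b}`; for
`b = 2` one has `γ₂ = 2/√3`, and the hexagonal lattice spanned by `(1,0)` and
`(-1/2, √3/2)` (i.e. by `1` and `e^{2πi/3}`) attains `λ₁(L)²/covol(L) = 2/√3`. -/
theorem hermite_bound_and_hexagonal_attains :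
    (∀ (b : ℕ), 1 ≤ b → ∀ v : Fin b → EuclideanSpace ℝ (Fin b), LinearIndependent ℝ v →
      latticeLambda1 v ≤ Real.sqrt (hermiteConstant b) * latticeCovol v ^ ((1 : ℝ) / b)) ∧
    hermiteConstant 2 = 2 / Real.sqrt 3 ∧
    ∃ v : Fin 2 → EuclideanSpace ℝ (Fin 2), LinearIndependent ℝ v ∧
      v 0 = (WithLp.equiv 2 (Fin 2 → ℝ)).symm ![1, 0] ∧
      v 1 = (WithLp.equiv 2 (Fin 2 → ℝ)).symm ![-(1 / 2), Real.sqrt 3 / 2] ∧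
      latticeLambda1 v ^ 2 / latticeCovol v = 2 / Real.sqrt 3 :=
  ⟨fun _ hb _ hv ↦ latticeLambda1_le_sqrt_hermiteConstant_mul hb hv, hermiteConstant_two,
    hexagonalLattice, linearIndependent_hexagonalLattice, rfl, rfl,
    latticeLambda1_hexagonalLattice_sq_div_latticeCovol⟩
end
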